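/- For Hermitian matrices A_1, ..., A_n (n ≥ 2) and a density matrix ρ, Σ_{i=1}^n I_ρ(A_i) ≥ (1/(2(n−1))) Σ_{1≤i<j≤n} I_ρ(A_i − A_j). -/

import Mathlib

open Matrix Finset
open scoped ComplexOrder

/-- The positive semidefinite square root of a positive semidefinite matrix
(the definition `Matrix.PosSemidef.sqrt` of the older Mathlib, since removed). -/
noncomputable def Matrix.PosSemidef.oldSqrt {n 𝕜 : Type*} [Fintype n] [DecidableEq n] [RCLike 𝕜]
    {A : Matrix n n 𝕜} (hA : A.PosSemidef) : Matrix n n 𝕜 :=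
  hA.1.eigenvectorUnitary.1 * diagonal ((↑) ∘ (√·) ∘ hA.1.eigenvalues) *
  (star hA.1.eigenvectorUnitary : Matrix n n 𝕜)

/-- Wigner–Yanase skew information `I_ρ(H) = (1/2)‖[√ρ, H]‖²` (Frobenius norm). -/
noncomputable def skewInfoR {d : ℕ} {ρ : Matrix (Fin d) (Fin d) ℂ}
    (hρ : ρ.PosSemidef) (H : Matrix (Fin d) (Fin d) ℂ) : ℝ :=
  1 / 2 * ∑ i, ∑ j, ‖(hρ.oldSqrt * H - H * hρ.oldSqrt) i j‖ ^ 2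

/-! `H ↦ [√ρ, H]` is linear, so `I_ρ(A - B) = ½‖[√ρ, A] - [√ρ, B]‖² ≤ 2 (I_ρ(A) + I_ρ(B))`.
Summing over the pairs `i < j`, each index occurs in exactly `n - 1` pairs, whence the
factor `2 (n - 1)`. -/

theorem Finset.sum_filter_lt_add_eq_card_sub_one_nsmul {ι M : Type*} [Fintype ι] [LinearOrder ι]
    [AddCommMonoid M] (g : ι → M) :
    ∑ p ∈ univ.filter (fun p : ι × ι => p.1 < p.2), (g p.1 + g p.2) =
      (Fintype.card ι - 1) • ∑ i, g i := by
  have hswap : ∑ p ∈ univ.filter (fun p : ι × ι => p.1 < p.2), g p.2 =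
      ∑ p ∈ univ.filter (fun p : ι × ι => p.2 < p.1), g p.1 :=
    Finset.sum_equiv (Equiv.prodComm ι ι) (by simp) (by simp)
  rw [sum_add_distrib, hswap, ← sum_union (disjoint_filter.2 fun p _ h => h.asymm),
    ← filter_or]
  simp_rw [lt_or_lt_iff_ne, sum_filter, Fintype.sum_prod_type, smul_sum]
  refine sum_congr rfl fun i _ => ?_
  rw [← sum_filter, sum_const, filter_ne, card_erase_of_mem (mem_univ i), card_univ]

section
attribute [local instance] Matrix.frobeniusNormedAddCommGroup

theorem skewInfoR_eq_half_norm_sq {d : ℕ} {ρ : Matrix (Fin d) (Fin d) ℂ} (hρ : ρ.PosSemidef)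
    (H : Matrix (Fin d) (Fin d) ℂ) :
    skewInfoR hρ H = 1 / 2 * ‖hρ.oldSqrt * H - H * hρ.oldSqrt‖ ^ 2 := by
  rw [skewInfoR, frobenius_norm_def, ← Real.rpow_natCast, ← Real.rpow_mul (by positivity)]
  norm_num

theorem skewInfoR_sub_le {d : ℕ} {ρ : Matrix (Fin d) (Fin d) ℂ} (hρ : ρ.PosSemidef)
    (A B : Matrix (Fin d) (Fin d) ℂ) :
    skewInfoR hρ (A - B) ≤ 2 * (skewInfoR hρ A + skewInfoR hρ B) := by
  simp only [skewInfoR_eq_half_norm_sq]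
  set S := hρ.oldSqrt
  have hcomm : S * (A - B) - (A - B) * S = (S * A - A * S) - (S * B - B * S) := by
    simp only [mul_sub, sub_mul]; abel
  have hsq := (pow_le_pow_left₀ (norm_nonneg _) (norm_sub_le (S * A - A * S) (S * B - B * S)) 2).trans
    add_sq_le
  rw [hcomm]
  linarith
end

theorem skewInfo_sum_ge_pairs_sub_general {d n : ℕ} (hn : 2 ≤ n)
    (ρ : Matrix (Fin d) (Fin d) ℂ) (hρ : ρ.PosSemidef)
    (A : Fin n → Matrix (Fin d) (Fin d) ℂ) :
    ∑ i, skewInfoR hρ (A i) ≥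
      (1 / (2 * ((n : ℝ) - 1))) *
        ∑ p ∈ Finset.univ.filter (fun p : Fin n × Fin n => p.1 < p.2),
          skewInfoR hρ (A p.1 - A p.2) := by
  have hn1 : (0 : ℝ) < n - 1 := sub_pos.2 (Nat.one_lt_cast.2 hn)
  have hcount := sum_filter_lt_add_eq_card_sub_one_nsmul fun i => skewInfoR hρ (A i)
  rw [nsmul_eq_mul, Fintype.card_fin, Nat.cast_sub (by omega), Nat.cast_one] at hcount
  calc (1 / (2 * ((n : ℝ) - 1))) *
        ∑ p ∈ Finset.univ.filter (fun p : Fin n × Fin n => p.1 < p.2), skewInfoR hρ (A p.1 - A p.2)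
      ≤ (1 / (2 * ((n : ℝ) - 1))) * ∑ p ∈ Finset.univ.filter (fun p : Fin n × Fin n => p.1 < p.2),
          2 * (skewInfoR hρ (A p.1) + skewInfoR hρ (A p.2)) := by
        gcongr with p
        exact skewInfoR_sub_le hρ _ _
    _ = ∑ i, skewInfoR hρ (A i) := by
        rw [← mul_sum, hcount]
        field_simp

theorem skewInfo_sum_ge_pairs_sub {d n : ℕ} (hn : 2 ≤ n)
    (ρ : Matrix (Fin d) (Fin d) ℂ) (hρ : ρ.PosSemidef) (hτ : ρ.trace = 1)
    (A : Fin n → Matrix (Fin d) (Fin d) ℂ) (hA : ∀ i, (A i).IsHermitian) :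
    ∑ i, skewInfoR hρ (A i) ≥
      (1 / (2 * ((n : ℝ) - 1))) *
        ∑ p ∈ Finset.univ.filter (fun p : Fin n × Fin n => p.1 < p.2),
          skewInfoR hρ (A p.1 - A p.2) :=
  skewInfo_sum_ge_pairs_sub_general hn ρ hρ A
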